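/- Let q be a prime power, n ≥ 1, and let E be a subset of 𝔽_q^n that is Kakeya with respect to hyperplanes, i.e., for every (n−1)-dimensional linear subspace w of 𝔽_q^n there exists a vector v ∈ 𝔽_q^n such that the affine translate v + w is contained in E. Then |E| ≥ (q^{2n} − q^n)/(q^n + q^2 − 2q). -/

import Mathlib

/-!
Index the hyperplanes by the nonzero functionals `f` on `V = 𝔽_q^n` (each hyperplane is counted
`q - 1` times) and let `T f ⊆ E` be a level set of `f`. Each `T f` has `q^(n-1)` points; two of
them share at most `q^(n-1)` points when `f` and `g` are proportional and exactly `q^(n-2)` points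
otherwise, because `(f, g) : V → 𝔽_q²` is then onto. Cauchy–Schwarz for the multiplicity
`x ↦ #{f | x ∈ T f}` on `E` gives `(∑ |T f|)² ≤ |E| · ∑_{f,g} |T f ∩ T g|`, which is the bound.
-/

open Finset Module

theorem AddMonoidHom.card_mul_card_fiber_of_surjective {G H 𝓕 : Type*} [AddGroup G] [Fintype G]
    [AddMonoid H] [Fintype H] [DecidableEq H] [FunLike 𝓕 G H] [AddMonoidHomClass 𝓕 G H] {φ : 𝓕}
    (hφ : Function.Surjective φ) (y : H) :
    Fintype.card H * #{x | φ x = y} = Fintype.card G := calc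
  _ = ∑ z : H, #{x | φ x = z} := by
    rw [sum_congr rfl fun z _ => AddMonoidHom.card_fiber_eq_of_mem_range φ (hφ z) (hφ y),
      sum_const, card_univ, smul_eq_mul]
  _ = Fintype.card G := (card_eq_sum_card_fiberwise (by simp)).symm

theorem Finset.sq_sum_card_le_card_mul_sum_card_inter {ι α : Type*} [DecidableEq α]
    (s : Finset ι) (E : Finset α) (T : ι → Finset α) (hT : ∀ i ∈ s, T i ⊆ E) :
    (∑ i ∈ s, #(T i)) ^ 2 ≤ #E * ∑ i ∈ s, ∑ j ∈ s, #(T i ∩ T j) := by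
  have hcard : ∀ i ∈ s, ∀ j,
      #(T i ∩ T j) = ∑ x ∈ E, if x ∈ T i ∧ x ∈ T j then 1 else 0 := by
    intro i hi j
    rw [← card_filter, ← filter_mem_eq_inter]
    congr 1; ext x; simp only [mem_filter]
    exact ⟨fun h => ⟨hT i hi h.1, h⟩, fun h => h.2⟩
  let m : α → ℕ := fun x => ∑ i ∈ s, if x ∈ T i then 1 else 0
  have hsum : ∑ i ∈ s, #(T i) = ∑ x ∈ E, m x := by
    rw [sum_comm]
    exact sum_congr rfl fun i hi => by simpa using hcard i hi i
  have hsumsq : ∑ i ∈ s, ∑ j ∈ s, #(T i ∩ T j) = ∑ x ∈ E, m x ^ 2 := by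
    simp only [m, sq, sum_mul_sum, ite_zero_mul_ite_zero, mul_one]
    rw [sum_comm (s := E)]
    exact sum_congr rfl fun i hi => by
      rw [sum_comm (s := E)]; exact sum_congr rfl fun j _ => hcard i hi j
  rw [hsum, hsumsq]
  exact sq_sum_le_card_mul_sum_sq

theorem Submodule.natCard_span_singleton {R M : Type*} [Ring R] [IsDomain R] [AddCommGroup M]
    [Module R M] [Module.IsTorsionFree R M] {x : M} (hx : x ≠ 0) :
    Nat.card (R ∙ x) = Nat.card R :=
  Nat.card_congr (LinearEquiv.toSpanNonzeroSingleton R M x hx).toEquiv.symm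

namespace Module.Dual

variable {F V : Type*} [Field F] [AddCommGroup V] [Module F V] {f g : Dual F V}

theorem prod_surjective_of_notMem_span_singleton (hf : f ≠ 0) (hg : g ∉ F ∙ f) :
    Function.Surjective (f.prod g) := by
  obtain ⟨y, hyf, hyg⟩ : ∃ y, f y = 0 ∧ g y ≠ 0 := by
    by_contra! h
    refine hg ?_
    simpa using mem_span_of_iInf_ker_le_ker (L := fun _ : Unit => f) (K := g)
      (by simpa [SetLike.le_def] using h)
  rintro ⟨u, v⟩
  obtain ⟨x, rfl⟩ := LinearMap.surjective_iff_ne_zero.2 hf u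
  refine ⟨x + ((v - g x) / g y) • y, ?_⟩
  simp [hyf, hyg]

variable [Fintype F] [Fintype V]

theorem card_dual [Fintype (Dual F V)] : Fintype.card (Dual F V) = Fintype.card V := by
  rw [card_eq_pow_finrank (K := F), card_eq_pow_finrank (K := F) (V := V),
    Subspace.dual_finrank_eq]

variable [DecidableEq F]

theorem card_mul_card_fiber (hf : f ≠ 0) (c : F) :
    Fintype.card F * #{x | f x = c} = Fintype.card V :=
  AddMonoidHom.card_mul_card_fiber_of_surjective (LinearMap.surjective_iff_ne_zero.2 hf) c

theorem sq_card_mul_card_fiber_inter (hf : f ≠ 0) (hg : g ∉ F ∙ f) (a b : F) :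
    Fintype.card F ^ 2 * #{x | f x = a ∧ g x = b} = Fintype.card V := by
  rw [sq, ← Fintype.card_prod]
  simpa [Prod.ext_iff] using
    AddMonoidHom.card_mul_card_fiber_of_surjective
      (prod_surjective_of_notMem_span_singleton hf hg) (a, b)

theorem sq_card_mul_sum_card_fiber_inter_le [Fintype (Dual F V)] (hf : f ≠ 0)
    (c : Dual F V → F) :
    (Fintype.card F : ℝ) ^ 2 * ∑ g ∈ univ.erase 0, (#{x | f x = c f ∧ g x = c g} : ℝ) ≤
      Fintype.card V * (Fintype.card V + Fintype.card F ^ 2 - 2 * Fintype.card F) := by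
  classical
  set q := Fintype.card F
  set N := Fintype.card V
  set P : Dual F V → ℕ := fun g => #{x | f x = c f ∧ g x = c g}
  have hspan : #{g : Dual F V | g ∈ F ∙ f} = q := by
    rw [← Fintype.card_subtype, ← Nat.card_eq_fintype_card, Submodule.natCard_span_singleton hf,
      Nat.card_eq_fintype_card]
  have hin : #{g ∈ univ.erase 0 | g ∈ F ∙ f} = q - 1 := by
    rw [filter_erase, card_erase_of_mem (by simp), hspan]
  have hout : #{g ∈ univ.erase 0 | g ∉ F ∙ f} = N - q := by
    rw [filter_erase, erase_eq_of_notMem (by simp), filter_not, card_sdiff_of_subset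
      (filter_subset _ _), hspan, card_univ, card_dual]
  have hqN : q ≤ N := hspan ▸ (card_le_univ _).trans_eq card_dual
  have hP_in : ∀ g, q ^ 2 * P g ≤ q * N := fun g => calc
    q ^ 2 * P g ≤ q * (q * #{x | f x = c f}) := by
      rw [sq, mul_assoc]
      gcongr
      exact card_le_card (monotone_filter_right _ fun _ _ h => h.1)
    _ = q * N := congrArg (q * ·) (card_mul_card_fiber hf (c f))
  have hP_out : ∀ g ∉ F ∙ f, q ^ 2 * P g = N := fun g hg =>
    sq_card_mul_card_fiber_inter hf hg (c f) (c g)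
  have hsum : q ^ 2 * ∑ g ∈ univ.erase 0, P g ≤ (q - 1) * (q * N) + (N - q) * N := by
    rw [mul_sum, ← sum_filter_add_sum_filter_not _ (· ∈ F ∙ f)]
    gcongr
    · exact (sum_le_card_nsmul _ _ _ fun g _ => hP_in g).trans_eq (by rw [hin, smul_eq_mul])
    · rw [sum_congr rfl fun g hg => hP_out g (mem_filter.1 hg).2, sum_const, hout, smul_eq_mul]
  have hq : 1 ≤ q := Fintype.card_pos
  calc (q : ℝ) ^ 2 * ∑ g ∈ univ.erase 0, (P g : ℝ)
      = ((q ^ 2 * ∑ g ∈ univ.erase 0, P g : ℕ) : ℝ) := by push_cast; rfl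
    _ ≤ (((q - 1) * (q * N) + (N - q) * N : ℕ) : ℝ) := by exact_mod_cast hsum
    _ = N * (N + q ^ 2 - 2 * q) := by push_cast [Nat.cast_sub hq, Nat.cast_sub hqN]; ring

end Module.Dual

/-- Affine hyperplanes are exactly the level sets of nonzero linear functionals. -/
def IsHyperplaneKakeya (F : Type*) {V : Type*} [Field F] [AddCommGroup V] [Module F V]
    (E : Set V) : Prop :=
  ∀ f : Dual F V, f ≠ 0 → ∃ c, f ⁻¹' {c} ⊆ E

section
variable {F V : Type*} [Field F] [AddCommGroup V] [Module F V] {E : Set V}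

theorem isHyperplaneKakeya_of_forall_translate_subset [FiniteDimensional F V]
    (hE : ∀ w : Submodule F V, finrank F w = finrank F V - 1 →
      ∃ v : V, (v + ·) '' (w : Set V) ⊆ E) :
    IsHyperplaneKakeya F E := by
  intro f hf
  obtain ⟨v, hv⟩ := hE (LinearMap.ker f) (by have := f.finrank_ker_add_one_of_ne_zero hf; omega)
  refine ⟨f v, fun x hx => hv ⟨x - v, ?_, add_sub_cancel v x⟩⟩
  simpa [sub_eq_zero] using hx

theorem IsHyperplaneKakeya.sub_one_mul_card_le [Fintype F] [Fintype V] [Fintype (Dual F V)]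
    (hE : IsHyperplaneKakeya F E) :
    ((Fintype.card V : ℝ) - 1) * Fintype.card V ≤
      E.ncard * (Fintype.card V + Fintype.card F ^ 2 - 2 * Fintype.card F) := by
  classical
  set q := Fintype.card F
  set N := Fintype.card V
  choose! c hc using hE
  let s : Finset (Dual F V) := univ.erase 0
  let T : Dual F V → Finset V := fun f => {x | f x = c f}
  have hTE : ∀ f ∈ s, T f ⊆ E.toFinset := fun f hf x hx => by
    simpa using hc f (ne_of_mem_erase hf) (by simpa [T] using hx)
  have hT : ∀ f ∈ s, (q : ℝ) * #(T f) = N := fun f hf => by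
    exact_mod_cast Dual.card_mul_card_fiber (ne_of_mem_erase hf) (c f)
  have hN : (1 : ℝ) ≤ N := by exact_mod_cast Fintype.card_pos
  have hs : (#s : ℝ) = N - 1 := by
    rw [card_erase_of_mem (mem_univ 0), card_univ, Dual.card_dual, Nat.cast_sub Fintype.card_pos,
      Nat.cast_one]
  have hfirst : (q : ℝ) * ∑ f ∈ s, (#(T f) : ℝ) = (N - 1) * N := by
    rw [mul_sum, sum_congr rfl hT, sum_const, nsmul_eq_mul, hs]
  have hsecond : (q : ℝ) ^ 2 * ∑ f ∈ s, ∑ g ∈ s, (#(T f ∩ T g) : ℝ) ≤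
      (N - 1) * (N * (N + q ^ 2 - 2 * q)) := by
    rw [mul_sum, ← hs, ← nsmul_eq_mul]
    refine sum_le_card_nsmul _ _ _ fun f hf => ?_
    simpa only [T, ← filter_and] using
      Dual.sq_card_mul_sum_card_fiber_inter_le (ne_of_mem_erase hf) c
  have hcs : (∑ f ∈ s, (#(T f) : ℝ)) ^ 2 ≤
      #E.toFinset * ∑ f ∈ s, ∑ g ∈ s, (#(T f ∩ T g) : ℝ) := by
    exact_mod_cast sq_sum_card_le_card_mul_sum_card_inter s E.toFinset T hTE
  have hD : (0 : ℝ) ≤ N + q ^ 2 - 2 * q := by nlinarith [sq_nonneg ((q : ℝ) - 1)]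
  have hkey : ((N - 1) * N : ℝ) * ((N - 1) * N) ≤
      ((N - 1) * N) * (#E.toFinset * (N + q ^ 2 - 2 * q)) := calc
    _ = (q : ℝ) ^ 2 * (∑ f ∈ s, (#(T f) : ℝ)) ^ 2 := by rw [← hfirst]; ring
    _ ≤ (q : ℝ) ^ 2 * (#E.toFinset * ∑ f ∈ s, ∑ g ∈ s, (#(T f ∩ T g) : ℝ)) := by
      gcongr
    _ = #E.toFinset * ((q : ℝ) ^ 2 * ∑ f ∈ s, ∑ g ∈ s, (#(T f ∩ T g) : ℝ)) := by ring
    _ ≤ #E.toFinset * ((N - 1) * (N * (N + q ^ 2 - 2 * q))) := by gcongr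
    _ = _ := by ring
  rw [Set.ncard_eq_toFinset_card']
  rcases (mul_nonneg (sub_nonneg.2 hN) (zero_le_one.trans hN)).eq_or_lt with h0 | hpos
  · rw [← h0]; exact mul_nonneg (Nat.cast_nonneg _) hD
  · exact le_of_mul_le_mul_left hkey hpos

end

theorem kakeya_hyperplane_card_lower_bound_general
    (q n : ℕ)
    (F : Type*) [Field F] [Fintype F] (hF : Fintype.card F = q)
    (E : Set (Fin n → F))
    (hE : ∀ w : Submodule F (Fin n → F), Module.finrank F w = n - 1 →
      ∃ v : Fin n → F, (v + ·) '' (w : Set (Fin n → F)) ⊆ E) :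
    ((q : ℝ) ^ (2 * n) - q ^ n) / ((q : ℝ) ^ n + q ^ 2 - 2 * q) ≤ E.ncard := by
  subst hF
  have : Finite (Dual F (Fin n → F)) := Module.finite_of_finite F
  let := Fintype.ofFinite (Dual F (Fin n → F))
  have hkakeya : IsHyperplaneKakeya F E :=
    isHyperplaneKakeya_of_forall_translate_subset (by simpa only [finrank_fin_fun] using hE)
  have hbound := hkakeya.sub_one_mul_card_le
  simp only [Fintype.card_fun, Fintype.card_fin, Nat.cast_pow] at hbound
  have hq : (2 : ℝ) ≤ Fintype.card F := by exact_mod_cast Fintype.one_lt_card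
  have hqn : (1 : ℝ) ≤ (Fintype.card F : ℝ) ^ n := one_le_pow₀ (by linarith)
  rw [div_le_iff₀ (by nlinarith)]
  calc _ = ((Fintype.card F : ℝ) ^ n - 1) * (Fintype.card F : ℝ) ^ n := by ring
    _ ≤ _ := hbound

/-- Let `q` be a prime power, `n ≥ 1`, and let `E ⊆ 𝔽_q^n` be Kakeya with
respect to hyperplanes: for every `(n-1)`-dimensional linear subspace `w` of `𝔽_q^n` there is a
vector `v` such that the affine translate `v + w` is contained in `E`. Then
`|E| ≥ (q^(2n) - q^n) / (q^n + q^2 - 2q)`. -/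
theorem kakeya_hyperplane_card_lower_bound
    (q n : ℕ) (hq : IsPrimePow q) (hn : 1 ≤ n)
    (F : Type*) [Field F] [Fintype F] (hF : Fintype.card F = q)
    (E : Set (Fin n → F))
    (hE : ∀ w : Submodule F (Fin n → F), Module.finrank F w = n - 1 →
      ∃ v : Fin n → F, (v + ·) '' (w : Set (Fin n → F)) ⊆ E) :
    ((q : ℝ) ^ (2 * n) - q ^ n) / ((q : ℝ) ^ n + q ^ 2 - 2 * q) ≤ E.ncard :=
  kakeya_hyperplane_card_lower_bound_general q n F hF E hE
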